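/- arXiv:2405.03467 — 3 statements merged into one kernel-verified Lean document; each statement's English description precedes it below -/
import Mathlib

section
/- Utilitarian PoC of a tree for two agents equals 2(m−1)/m. Lower bound construction: properly 2-color the tree red/blue; agent 1 values each red vertex v at deg(v)/(m−1) and agent 2 values each blue vertex v at deg(v)/(m−1) (zero otherwise). Then each agent's total value is 1, the unconstrained optimal utilitarian welfare is 2, and every connected 2-allocation (which cuts exactly one edge of the tree) has utilitarian welfare at most m/(m−1). -/
/-!
Write `δ = u₀ - u₁`; since agent 1 values everything at 1, the welfare of an allocation `(S, Sᶜ)`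
is `1 + δ(S)`. Root a breadth-first spanning tree of the (connected) graph at `r` and let `T c` be
the subtree below `c`. Summation by parts along the tree gives
`δ(S) = ∑_{c ≠ r} (𝟙_S c - 𝟙_S (parent c)) δ(T c)`, hence `δ(S) ≤ (m - 1) t` with
`t = max_c |δ(T c)|`. The cut `(T c, (T c)ᶜ)` attaining `t`, or its swap, is connected with welfare
`1 + t`, and `δ(S) ≤ 1` as well; these two bounds give the ratio `2(m - 1)/m`.

For the lower bound, agent `i` values the vertices of colour `i` in a proper 2-colouring by
`deg v / (m - 1)`. Counting darts, the welfare of an allocation is the number of edges counted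
from their endpoint in the "own" part, and an edge is counted twice only if it joins the two
parts. In a tree with both parts connected there is at most one such edge, so the welfare is
at most `(m - 1 + 1)/(m - 1)`.
-/

def ConnB {V : Type*} (G : SimpleGraph V) (s : Finset V) : Prop :=
  s = ∅ ∨ (G.induce (s : Set V)).Connected

def IsAlloc {V : Type*} [Fintype V] [DecidableEq V] {n : ℕ} (A : Fin n → Finset V) : Prop :=
  (∀ i j : Fin n, i ≠ j → Disjoint (A i) (A j)) ∧ Finset.univ.biUnion A = Finset.univ

open Finset

namespace SimpleGraph

section Subtree

variable {V : Type*} {G : SimpleGraph V} {r w c : V}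

open Classical in
/-- A neighbour of `w` strictly closer to `r`, or `w` itself if there is none, which in a connected
graph happens only at the root. -/
noncomputable def parent (G : SimpleGraph V) (r w : V) : V :=
  if h : ∃ p, G.Adj w p ∧ G.dist p r < G.dist w r then h.choose else w

lemma dist_parent_le (r w : V) : G.dist (G.parent r w) r ≤ G.dist w r := by
  unfold parent
  split_ifs with h
  · exact h.choose_spec.2.le
  · exact le_rfl

@[simp] lemma parent_self (r : V) : G.parent r r = r := by
  simp [parent]

lemma Connected.adj_parent_and_dist_lt (hG : G.Connected) (hw : w ≠ r) :
    G.Adj w (G.parent r w) ∧ G.dist (G.parent r w) r < G.dist w r := by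
  have hex : ∃ p, G.Adj w p ∧ G.dist p r < G.dist w r := by
    obtain ⟨q, hq⟩ := hG.exists_walk_length_eq_dist w r
    have hnil : ¬ q.Nil := Walk.not_nil_of_ne hw
    refine ⟨q.snd, q.adj_snd hnil, ?_⟩
    have := q.length_tail_add_one hnil
    have := dist_le q.tail
    omega
  rw [parent, dif_pos hex]
  exact hex.choose_spec

lemma dist_iterate_parent_le (r w : V) (k : ℕ) : G.dist ((G.parent r)^[k] w) r ≤ G.dist w r := by
  induction k generalizing w with
  | zero => exact le_rfl
  | succ k ih => exact (ih _).trans (dist_parent_le r w)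

variable [Fintype V]

open Classical in
noncomputable def subtree (G : SimpleGraph V) (r c : V) : Finset V :=
  {w | ∃ k, (G.parent r)^[k] w = c}

lemma mem_subtree : w ∈ G.subtree r c ↔ ∃ k, (G.parent r)^[k] w = c := by
  simp [subtree]

lemma self_mem_subtree (r c : V) : c ∈ G.subtree r c := mem_subtree.2 ⟨0, rfl⟩

lemma root_mem_subtree_iff : r ∈ G.subtree r c ↔ c = r := by
  simp [mem_subtree, Function.iterate_fixed (parent_self (G := G) r), eq_comm]

lemma mem_subtree_iff_eq_or_parent_mem :
    w ∈ G.subtree r c ↔ w = c ∨ G.parent r w ∈ G.subtree r c := by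
  simp only [mem_subtree]
  constructor
  · rintro ⟨_ | k, hk⟩
    · exact Or.inl hk
    · exact Or.inr ⟨k, hk⟩
  · rintro (rfl | ⟨k, hk⟩)
    · exact ⟨0, rfl⟩
    · exact ⟨k + 1, hk⟩

lemma Connected.parent_notMem_subtree (hG : G.Connected) (hw : w ≠ r) :
    G.parent r w ∉ G.subtree r w := by
  rintro h
  obtain ⟨k, hk⟩ := mem_subtree.1 h
  have := dist_iterate_parent_le (G := G) r (G.parent r w) k
  rw [hk] at this
  exact (hG.adj_parent_and_dist_lt hw).2.not_ge this

variable [DecidableEq V]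

lemma Connected.sum_sub_parent_eq (hG : G.Connected) (g : V → ℝ) (w : V) :
    ∑ c ∈ univ.erase r with w ∈ G.subtree r c, (g c - g (G.parent r c)) = g w - g r := by
  induction hd : G.dist w r using Nat.strong_induction_on generalizing w with
  | _ n ih =>
    subst hd
    by_cases hw : w = r
    · subst hw
      have : (univ.erase w).filter (w ∈ G.subtree w ·) = ∅ := by
        ext c; simp [root_mem_subtree_iff]
      simp [this]
    · have hsplit : (univ.erase r).filter (w ∈ G.subtree r ·) =
          insert w ((univ.erase r).filter (G.parent r w ∈ G.subtree r ·)) := by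
        ext c
        simp only [mem_filter, mem_erase, mem_univ, and_true, mem_insert]
        rw [mem_subtree_iff_eq_or_parent_mem]
        constructor
        · rintro ⟨hc, rfl | h⟩ <;> simp_all
        · rintro (rfl | ⟨hc, h⟩) <;> simp_all
      have hnot : w ∉ (univ.erase r).filter (G.parent r w ∈ G.subtree r ·) := by
        simp [hG.parent_notMem_subtree hw]
      rw [hsplit, sum_insert hnot, ih _ (hG.adj_parent_and_dist_lt hw).2 _ rfl]
      ring

lemma Connected.sum_mul_eq_sum_subtree (hG : G.Connected) (r : V) {δ : V → ℝ}
    (hδ : ∑ v, δ v = 0) (g : V → ℝ) :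
    ∑ v, δ v * g v =
      ∑ c ∈ univ.erase r, (g c - g (G.parent r c)) * ∑ w ∈ G.subtree r c, δ w := by
  calc ∑ v, δ v * g v = ∑ v, δ v * (g v - g r) := by
        simp [mul_sub, sum_sub_distrib, ← sum_mul, hδ]
    _ = ∑ v, ∑ c ∈ univ.erase r with v ∈ G.subtree r c, δ v * (g c - g (G.parent r c)) := by
        simp_rw [← mul_sum, hG.sum_sub_parent_eq]
    _ = ∑ c ∈ univ.erase r, ∑ v ∈ G.subtree r c, δ v * (g c - g (G.parent r c)) :=
        sum_comm' (by simp [and_comm])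
    _ = _ := by simp_rw [mul_sum, mul_comm]

lemma Connected.sum_le_card_sub_one_mul (hG : G.Connected) (r : V) {δ : V → ℝ}
    (hδ : ∑ v, δ v = 0) {t : ℝ} (ht : ∀ c ≠ r, |∑ w ∈ G.subtree r c, δ w| ≤ t)
    (S : Finset V) : ∑ v ∈ S, δ v ≤ (Fintype.card V - 1) * t := by
  have hS : ∑ v ∈ S, δ v = ∑ v, δ v * (if v ∈ S then 1 else 0) := by
    simp [mul_ite, sum_ite_mem]
  rw [hS, hG.sum_mul_eq_sum_subtree r hδ]
  calc _ ≤ ∑ c ∈ univ.erase r, t := by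
        refine sum_le_sum fun c hc => ?_
        have hind : |(if c ∈ S then 1 else 0) - (if G.parent r c ∈ S then 1 else 0 : ℝ)| ≤ 1 := by
          split_ifs <;> norm_num
        calc _ ≤ |_| := le_abs_self _
          _ = _ := abs_mul _ _
          _ ≤ 1 * t := mul_le_mul hind (ht c (ne_of_mem_erase hc)) (abs_nonneg _) zero_le_one
          _ = t := one_mul t
    _ = (Fintype.card V - 1) * t := by
        rw [sum_const, card_erase_of_mem (mem_univ r), card_univ, nsmul_eq_mul,
          Nat.cast_sub (Fintype.card_pos_iff.2 ⟨r⟩), Nat.cast_one]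

omit [Fintype V] [DecidableEq V] in
lemma induce_connected_of_descent {s : Set V} {a : V} (ha : a ∈ s) (h : V → ℕ)
    (hdesc : ∀ w ∈ s, w ≠ a → ∃ w' ∈ s, G.Adj w w' ∧ h w' < h w) :
    (G.induce s).Connected := by
  rw [connected_iff_exists_forall_reachable]
  refine ⟨⟨a, ha⟩, ?_⟩
  rintro ⟨w, hw⟩
  induction hn : h w using Nat.strong_induction_on generalizing w with
  | _ n ih =>
    subst hn
    by_cases hwa : w = a
    · subst hwa; rfl
    · obtain ⟨w', hw', hadj, hlt⟩ := hdesc w hw hwa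
      have hadj' : (G.induce s).Adj ⟨w', hw'⟩ ⟨w, hw⟩ := hadj.symm
      exact (ih _ hlt w' hw' rfl).trans hadj'.reachable

omit [DecidableEq V] in
lemma Connected.induce_subtree_connected (hG : G.Connected) (r c : V) :
    (G.induce (G.subtree r c : Set V)).Connected := by
  refine induce_connected_of_descent (self_mem_subtree r c) (G.dist · r) fun w hw hwc => ?_
  have hwr : w ≠ r := by
    rintro rfl
    exact hwc (root_mem_subtree_iff.1 hw).symm
  have hpar := (mem_subtree_iff_eq_or_parent_mem.1 (Finset.mem_coe.1 hw)).resolve_left hwc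
  exact ⟨_, hpar, hG.adj_parent_and_dist_lt hwr⟩

lemma Connected.induce_compl_subtree_connected (hG : G.Connected) {r c : V} (hc : c ≠ r) :
    (G.induce ((G.subtree r c)ᶜ : Finset V)).Connected := by
  have hr : r ∈ ((G.subtree r c)ᶜ : Finset V) := by simp [root_mem_subtree_iff, hc]
  refine induce_connected_of_descent hr (G.dist · r) fun w hw hwr => ?_
  have hpar : G.parent r w ∈ ((G.subtree r c)ᶜ : Finset V) := by
    simp only [coe_compl, Set.mem_compl_iff, mem_coe, mem_compl] at hw ⊢
    exact fun h => hw (mem_subtree_iff_eq_or_parent_mem.2 (Or.inr h))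
  exact ⟨_, hpar, hG.adj_parent_and_dist_lt hwr⟩

theorem Connected.exists_connected_cut (hG : G.Connected) (hV : 2 ≤ Fintype.card V)
    {δ : V → ℝ} (hδ : ∑ v, δ v = 0) :
    ∃ X : Finset V, (G.induce (X : Set V)).Connected ∧ (G.induce (Xᶜ : Finset V)).Connected ∧
      ∀ S : Finset V, ∑ v ∈ S, δ v ≤ (Fintype.card V - 1) * ∑ v ∈ X, δ v := by
  obtain ⟨r⟩ : Nonempty V := Fintype.card_pos_iff.1 (by omega)
  have hne : (univ.erase r).Nonempty := by
    rw [← card_pos, card_erase_of_mem (mem_univ r), card_univ]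
    omega
  obtain ⟨c, hc, hmax⟩ := (univ.erase r).exists_max_image (|∑ w ∈ G.subtree r ·, δ w|) hne
  have hcr : c ≠ r := ne_of_mem_erase hc
  have hbound := hG.sum_le_card_sub_one_mul r hδ fun c' hc' => hmax c' (by simpa using hc')
  have hcompl : ∑ v ∈ (G.subtree r c)ᶜ, δ v = -∑ v ∈ G.subtree r c, δ v := by
    linarith [sum_compl_add_sum (G.subtree r c) δ]
  rcases le_or_gt 0 (∑ w ∈ G.subtree r c, δ w) with hpos | hneg
  · refine ⟨G.subtree r c, hG.induce_subtree_connected r c,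
      hG.induce_compl_subtree_connected hcr, fun S => ?_⟩
    simpa [abs_of_nonneg hpos] using hbound S
  · refine ⟨(G.subtree r c)ᶜ, hG.induce_compl_subtree_connected hcr, ?_, fun S => ?_⟩
    · rw [compl_compl]
      exact hG.induce_subtree_connected r c
    · simpa [abs_of_neg hneg, hcompl] using hbound S

end Subtree

section Forest

variable {V : Type*} {G : SimpleGraph V}

lemma Preconnected.reachable_deleteEdges {s : Set V} (hs : (G.induce s).Preconnected)
    {a b : V} (hb : b ∉ s) {x y : V} (hx : x ∈ s) (hy : y ∈ s) :
    (G.deleteEdges {s(a, b)}).Reachable x y := by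
  let φ : G.induce s →g G.deleteEdges {s(a, b)} :=
    ⟨Subtype.val, fun {x y} h => by
      refine deleteEdges_adj.2 ⟨h, ?_⟩
      rintro hxy
      rcases Sym2.eq_iff.1 (Set.mem_singleton_iff.1 hxy) with ⟨_, rfl⟩ | ⟨rfl, _⟩
      exacts [hb y.2, hb x.2]⟩
  exact (hs ⟨x, hx⟩ ⟨y, hy⟩).map φ

variable [Fintype V] [DecidableRel G.Adj]

lemma Coloring.sum_degree_color_eq (col : G.Coloring (Fin 2)) (i : Fin 2) :
    ∑ v with col v = i, G.degree v = #G.edgeFinset := by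
  refine isBipartiteWith_sum_degrees_eq_card_edges (t := {v | col v ≠ i}) ⟨?_, fun v w h => ?_⟩
  · simp [Set.disjoint_left]
  · have := col.valid h
    simp only [coe_filter, mem_univ, true_and, Set.mem_ofPred_eq]
    omega

variable [DecidableEq V]

lemma IsAcyclic.card_dart_between_le_one (hG : G.IsAcyclic) {s t : Finset V}
    (hst : Disjoint s t) (hs : (G.induce (s : Set V)).Preconnected)
    (ht : (G.induce (t : Set V)).Preconnected) :
    #{d : G.Dart | d.fst ∈ s ∧ d.snd ∈ t} ≤ 1 := by
  refine card_le_one.2 fun d hd d' hd' => ?_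
  simp only [mem_filter, mem_univ, true_and] at hd hd'
  by_contra hne
  have hedge : s(d'.fst, d'.snd) ∉ ({s(d.fst, d.snd)} : Set (Sym2 V)) := by
    rintro h
    rcases Sym2.eq_iff.1 (Set.mem_singleton_iff.1 h) with ⟨h1, h2⟩ | ⟨h1, _⟩
    · exact hne ((Dart.ext_iff _ _).2 (Prod.ext h1.symm h2.symm))
    · exact Finset.disjoint_left.1 hst hd'.1 (h1 ▸ hd.2)
  -- `d` is a bridge, but `d.fst ⇝ d'.fst` inside `s`, then `d'`, then `d'.snd ⇝ d.snd` inside `t`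
  -- avoids it.
  apply isBridge_iff.1 (isAcyclic_iff_forall_adj_isBridge.1 hG d.adj)
  have hfst := hs.reachable_deleteEdges (a := d.fst) (Finset.disjoint_right.1 hst hd.2) hd.1 hd'.1
  have hsnd := ht.reachable_deleteEdges (a := d.snd) (b := d.fst) (Finset.disjoint_left.1 hst hd.1)
    hd'.2 hd.2
  rw [Sym2.eq_swap] at hsnd
  exact hfst.trans ((deleteEdges_adj.2 ⟨d'.adj, hedge⟩).reachable.trans hsnd)

lemma sum_degree_eq_card_dart (s : Finset V) :
    ∑ v ∈ s, G.degree v = #{d : G.Dart | d.fst ∈ s} := by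
  rw [card_eq_sum_card_fiberwise (f := fun d : G.Dart => d.fst) (t := s) (by intro d; simp)]
  refine sum_congr rfl fun v hv => ?_
  rw [← dart_fst_fiber_card_eq_degree]
  congr 1
  ext d
  simp only [mem_filter, mem_univ, true_and]
  exact ⟨fun h => ⟨h ▸ hv, h⟩, And.right⟩

lemma IsAcyclic.sum_degree_own_color_le (hG : G.IsAcyclic) (col : G.Coloring (Fin 2))
    (B : Fin 2 → Finset V) (hB : Disjoint (B 0) (B 1))
    (hconn : ∀ i, (G.induce (B i : Set V)).Preconnected) :
    ∑ i, ∑ v ∈ B i with col v = i, G.degree v ≤ #G.edgeFinset + 1 := by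
  set X : Finset V := {v | v ∈ B (col v)}
  have hX : ∑ i, ∑ v ∈ B i with col v = i, G.degree v = ∑ v ∈ X, G.degree v := by
    rw [← sum_fiberwise X col]
    refine sum_congr rfl fun i _ => sum_congr ?_ fun _ _ => rfl
    ext v
    simp only [X, mem_filter, mem_univ, true_and]
    constructor <;> rintro ⟨h, rfl⟩ <;> exact ⟨h, rfl⟩
  set D : Finset G.Dart := {d | d.fst ∈ X}
  set D' : Finset G.Dart := {d | d.snd ∈ X}
  have hDD' : #D' = #D := card_nbij' Dart.symm Dart.symm
    (fun d hd => by simpa [D, D'] using hd) (fun d hd => by simpa [D, D'] using hd)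
    (fun d _ => d.symm_symm) (fun d _ => d.symm_symm)
  have hcross : D ∩ D' ⊆ ({d | d.fst ∈ B 0 ∧ d.snd ∈ B 1} : Finset G.Dart) ∪
      ({d | d.fst ∈ B 1 ∧ d.snd ∈ B 0} : Finset G.Dart) := by
    intro d hd
    have hcol := col.valid d.adj
    simp only [D, D', X, mem_inter, mem_filter, mem_univ, true_and, mem_union] at hd ⊢
    obtain ⟨h1, h2⟩ := hd
    have hcases : ∀ a b : Fin 2, a ≠ b → a = 0 ∧ b = 1 ∨ a = 1 ∧ b = 0 := by decide
    rcases hcases _ _ hcol with ⟨ha, hb⟩ | ⟨ha, hb⟩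
    · exact Or.inl ⟨ha ▸ h1, hb ▸ h2⟩
    · exact Or.inr ⟨ha ▸ h1, hb ▸ h2⟩
  have hinter : #(D ∩ D') ≤ 2 :=
    (card_le_card hcross).trans <| (card_union_le _ _).trans <| add_le_add
      (hG.card_dart_between_le_one hB (hconn 0) (hconn 1))
      (hG.card_dart_between_le_one hB.symm (hconn 1) (hconn 0))
  have hunion : #(D ∪ D') ≤ 2 * #G.edgeFinset := by
    rw [← dart_card_eq_twice_card_edges]
    exact card_le_univ _
  have := card_union_add_card_inter D D'
  rw [hX, sum_degree_eq_card_dart]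
  change #D ≤ _
  omega

end Forest

end SimpleGraph

namespace IsAlloc

variable {V : Type*} [Fintype V] [DecidableEq V] {A : Fin 2 → Finset V}

lemma snd_eq_compl (hA : IsAlloc A) : A 1 = (A 0)ᶜ := by
  ext v
  have hcover : v ∈ univ.biUnion A := hA.2 ▸ mem_univ v
  rw [mem_biUnion] at hcover
  obtain ⟨i, -, hi⟩ := hcover
  rw [mem_compl]
  constructor
  · exact fun h1 h0 => disjoint_left.1 (hA.1 0 1 (by decide)) h0 h1
  · intro h0
    fin_cases i
    exacts [absurd hi h0, hi]

lemma welfare_eq (hA : IsAlloc A) {u : Fin 2 → V → ℝ} (hu1 : ∑ v, u 1 v = 1) :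
    ∑ i, ∑ v ∈ A i, u i v = 1 + ∑ v ∈ A 0, (u 0 v - u 1 v) := by
  rw [Fin.sum_univ_two, hA.snd_eq_compl, sum_sub_distrib]
  linarith [sum_compl_add_sum (A 0) (u 1)]

end IsAlloc

lemma isAlloc_pair {V : Type*} [Fintype V] [DecidableEq V] (s : Finset V) :
    IsAlloc ![s, sᶜ] := by
  refine ⟨fun i j hij => ?_, ?_⟩
  · fin_cases i <;> fin_cases j <;> simp_all [disjoint_compl_right, disjoint_compl_left]
  · ext v
    simp [Fin.exists_fin_two, em]

lemma ConnB.preconnected {V : Type*} {G : SimpleGraph V} {s : Finset V} (h : ConnB G s) :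
    (G.induce (s : Set V)).Preconnected := by
  rcases h with rfl | h
  · rintro ⟨v, hv⟩
    simp at hv
  · exact h.preconnected

lemma one_add_le_two_mul_sub_one_div_mul {m x t : ℝ} (hm : 2 ≤ m) (hx : x ≤ 1)
    (hxt : x ≤ (m - 1) * t) : 1 + x ≤ 2 * (m - 1) / m * (1 + t) := by
  rw [div_mul_eq_mul_div, le_div_iff₀ (by linarith)]
  rcases le_total ((m - 1) * t) 1 with h | h
  · nlinarith
  · nlinarith

namespace SimpleGraph

variable {V : Type*} [Fintype V] [DecidableEq V] {G : SimpleGraph V}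

theorem Connected.exists_connB_welfare_ge (hG : G.Connected) (hV : 2 ≤ Fintype.card V)
    (u : Fin 2 → V → ℝ) (hu : ∀ i v, 0 ≤ u i v) (hu1 : ∀ i, ∑ v, u i v = 1)
    (A : Fin 2 → Finset V) (hA : IsAlloc A) :
    ∃ B : Fin 2 → Finset V, IsAlloc B ∧ (∀ i, ConnB G (B i)) ∧
      ∑ i, ∑ v ∈ A i, u i v ≤
        2 * ((Fintype.card V : ℝ) - 1) / Fintype.card V * ∑ i, ∑ v ∈ B i, u i v := by
  obtain ⟨X, hX, hXc, hcut⟩ := hG.exists_connected_cut hV (δ := fun v => u 0 v - u 1 v)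
    (by simp [sum_sub_distrib, hu1])
  refine ⟨![X, Xᶜ], isAlloc_pair X, fun i => ?_, ?_⟩
  · fin_cases i
    exacts [Or.inr hX, Or.inr hXc]
  · rw [hA.welfare_eq (hu1 1), (isAlloc_pair X).welfare_eq (hu1 1)]
    refine one_add_le_two_mul_sub_one_div_mul (by exact_mod_cast hV) ?_ (hcut (A 0))
    calc ∑ v ∈ A 0, (u 0 v - u 1 v) ≤ ∑ v ∈ A 0, u 0 v :=
          sum_le_sum fun v _ => sub_le_self _ (hu 1 v)
      _ ≤ ∑ v, u 0 v := sum_le_univ_sum_of_nonneg (hu 0)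
      _ = 1 := hu1 0

theorem IsTree.exists_welfare_gap (hT : G.IsTree) (hV : 2 ≤ Fintype.card V) :
    ∃ u : Fin 2 → V → ℝ, (∀ i v, 0 ≤ u i v) ∧ (∀ i, ∑ v, u i v = 1) ∧
      (∃ A : Fin 2 → Finset V, IsAlloc A ∧ ∑ i, ∑ v ∈ A i, u i v = 2) ∧
      (∀ B : Fin 2 → Finset V, IsAlloc B → (∀ i, ConnB G (B i)) →
        ∑ i, ∑ v ∈ B i, u i v ≤ (Fintype.card V : ℝ) / ((Fintype.card V : ℝ) - 1)) := by
  classical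
  set col := hT.coloringTwo
  set n : ℝ := (Fintype.card V : ℝ) - 1
  have hn : (#G.edgeFinset : ℝ) = n := by
    simp only [n, ← hT.card_edgeFinset]
    push_cast
    ring
  have hnpos : 0 < n := by
    have : (2 : ℝ) ≤ Fintype.card V := by exact_mod_cast hV
    linarith
  set u : Fin 2 → V → ℝ := fun i v => if col v = i then G.degree v / n else 0
  have hsum (i : Fin 2) (S : Finset V) :
      ∑ v ∈ S, u i v = (∑ v ∈ S with col v = i, G.degree v : ℕ) / n := by
    rw [Nat.cast_sum, sum_div, sum_filter]
  have hone (i : Fin 2) : ∑ v, u i v = 1 := by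
    rw [hsum, col.sum_degree_color_eq, hn, div_self hnpos.ne']
  refine ⟨u, fun i v => ?_, hone, ⟨fun i => {v | col v = i}, ⟨?_, ?_⟩, ?_⟩, fun B hB hBc => ?_⟩
  · simp only [u]
    split_ifs <;> positivity
  · exact fun i j hij => disjoint_filter.2 fun v _ hi hj => hij (hi ▸ hj)
  · ext v
    simp
  · have hclass (i : Fin 2) : ∑ v with col v = i, u i v = 1 := by
      rw [← hone i, sum_filter]
      exact sum_congr rfl fun v _ => by split_ifs <;> simp [u, *]
    rw [Fin.sum_univ_two, hclass, hclass]
    norm_num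
  · calc ∑ i, ∑ v ∈ B i, u i v = (∑ i, ∑ v ∈ B i with col v = i, G.degree v : ℕ) / n := by
          simp_rw [hsum, Nat.cast_sum, sum_div]
      _ ≤ (#G.edgeFinset + 1 : ℕ) / n := by
          gcongr
          exact hT.isAcyclic.sum_degree_own_color_le col B (hB.1 0 1 (by decide))
            fun i => (hBc i).preconnected
      _ = Fintype.card V / n := by rw [hT.card_edgeFinset]

end SimpleGraph

/-- for a tree on `m ≥ 2` vertices and two agents, the utilitarian price of
connectivity equals `2(m−1)/m`.  Upper bound: the welfare of any allocation is matched up to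
factor `2(m−1)/m` by a connected allocation.  Lower bound: there is a normalized instance
(from a proper 2-coloring with values `deg(v)/(m−1)`) in which some allocation has utilitarian
welfare `2`, while every connected allocation has utilitarian welfare at most `m/(m−1)`. -/
theorem util_poc_tree {V : Type*} [Fintype V] [DecidableEq V]
    (G : SimpleGraph V) (hT : G.IsTree) (m : ℕ) (hm : Fintype.card V = m) (hm2 : 2 ≤ m) :
    (∀ u : Fin 2 → V → ℝ, (∀ i v, 0 ≤ u i v) → (∀ i, ∑ v, u i v = 1) →
      ∀ A : Fin 2 → Finset V, IsAlloc A →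
        ∃ B : Fin 2 → Finset V, IsAlloc B ∧ (∀ i, ConnB G (B i)) ∧
          ∑ i, ∑ v ∈ A i, u i v ≤ (2 * ((m : ℝ) - 1) / m) * ∑ i, ∑ v ∈ B i, u i v) ∧
    (∃ u : Fin 2 → V → ℝ, (∀ i v, 0 ≤ u i v) ∧ (∀ i, ∑ v, u i v = 1) ∧
      (∃ A : Fin 2 → Finset V, IsAlloc A ∧ ∑ i, ∑ v ∈ A i, u i v = 2) ∧
      (∀ B : Fin 2 → Finset V, IsAlloc B → (∀ i, ConnB G (B i)) →
        ∑ i, ∑ v ∈ B i, u i v ≤ (m : ℝ) / ((m : ℝ) - 1))) := by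
  subst hm
  exact ⟨hT.connected.exists_connB_welfare_ge hm2, hT.exists_welfare_gap hm2⟩
end

section
/- Utilitarian PoC lower bound for paths with n agents: let G be a path on m = cn + d vertices (c ≥ 1, 0 ≤ d ≤ n−1). In the instance where the vertices are positively valued by agents in the cyclically repeating order 1,2,...,n (so agents 1,...,d each value c+1 vertices at 1/(c+1) each and agents d+1,...,n each value c vertices at 1/c each), the unconstrained optimal utilitarian welfare is n, while every connected allocation allocates at most n + c − 1 items to agents who value them and thus has utilitarian welfare at most (n + c − 1)/c. Hence the utilitarian PoC of the path is at least nc/(n + c − 1). -/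
/-- The path on `m` vertices `0 — 1 — ⋯ — (m-1)`. -/
def pathGraph (m : ℕ) : SimpleGraph (Fin m) where
  Adj x y := x.val + 1 = y.val ∨ y.val + 1 = x.val
  symm := ⟨by rintro x y (h | h); exacts [Or.inr h, Or.inl h]⟩
  loopless := ⟨by rintro x (h | h) <;> omega⟩

open Finset

lemma pathGraph_induce_walk_Icc_subset {m : ℕ} {s : Set (Fin m)} {a b : s}
    (w : ((pathGraph m).induce s).Walk a b) : Set.Icc (a : Fin m) b ⊆ s := by
  induction w with
  | nil => simp
  | @cons a a' b hadj _ ih =>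
    intro x ⟨hax, hxb⟩
    rw [Fin.le_def] at hax
    have hstep : (a : Fin m).val + 1 = (a' : Fin m).val ∨
        (a' : Fin m).val + 1 = (a : Fin m).val := by
      simpa [pathGraph] using hadj
    by_cases hx : (a' : Fin m) ≤ x
    · exact ih ⟨hx, hxb⟩
    · rw [Fin.le_def] at hx
      exact (Fin.ext (by omega) : x = a) ▸ a.2

lemma ConnB.ordConnected {m : ℕ} {s : Finset (Fin m)} (hs : ConnB (pathGraph m) s) :
    (s : Set (Fin m)).OrdConnected := by
  refine ⟨fun a ha b hb => ?_⟩
  rcases hs with rfl | hconn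
  · simp at ha
  · obtain ⟨w⟩ := hconn.preconnected ⟨a, ha⟩ ⟨b, hb⟩
    exact pathGraph_induce_walk_Icc_subset w

lemma mul_card_filter_mod_eq_le {m : ℕ} {s : Finset (Fin m)} (hs : (s : Set (Fin m)).OrdConnected)
    (n r : ℕ) : n * #{v ∈ s | v.val % n = r} ≤ #s + n - 1 := by
  set t := {v ∈ s | v.val % n = r}
  obtain ht | ht := t.eq_empty_or_nonempty
  · simp [ht]
  have hmod : ∀ v ∈ t, v.val % n = r := fun v hv => (mem_filter.1 hv).2
  set a := t.min' ht
  set b := t.max' ht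
  have hab : a ≤ b := t.min'_le_max' ht
  have hspan : b.val + 1 - a ≤ #s := by
    rw [← Fin.card_Icc]
    refine card_le_card fun x hx => ?_
    exact hs.out (mem_filter.1 (t.min'_mem ht)).1 (mem_filter.1 (t.max'_mem ht)).1 (mem_Icc.1 hx)
  -- elements of one residue class are determined by their quotient by `n`
  have hquot : #t ≤ b.val / n + 1 - a.val / n := by
    rw [← Nat.card_Icc]
    refine card_le_card_of_injOn (fun v => v.val / n) (fun v hv => ?_) fun v hv w hw h => ?_
    · rw [mem_coe, mem_Icc]
      exact ⟨Nat.div_le_div_right (t.min'_le v hv), Nat.div_le_div_right (t.le_max' v hv)⟩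
    · exact Fin.ext (Nat.ext_div_modEq h ((hmod v hv).trans (hmod w hw).symm))
  have hqab : a.val / n ≤ b.val / n := Nat.div_le_div_right hab
  have hmul := Nat.mul_le_mul_left n (show #t + a.val / n ≤ b.val / n + 1 by omega)
  rw [Nat.mul_add, Nat.mul_add] at hmul
  have ha := Nat.div_add_mod a.val n
  have hb := Nat.div_add_mod b.val n
  rw [hmod a (t.min'_mem ht)] at ha
  rw [hmod b (t.max'_mem ht)] at hb
  have : a.val ≤ b.val := hab
  omega

lemma IsAlloc.sum_card {V : Type*} [Fintype V] [DecidableEq V] {n : ℕ} {A : Fin n → Finset V}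
    (hA : IsAlloc A) : ∑ i, #(A i) = Fintype.card V := by
  rw [← card_biUnion fun i _ j _ hij => hA.1 i j hij, hA.2, card_univ]

lemma isAlloc_residueClasses {m n : ℕ} (hn : 0 < n) :
    IsAlloc fun i : Fin n => ({v | v.val % n = i.val} : Finset (Fin m)) := by
  refine ⟨fun i j hij => disjoint_left.2 fun v hvi hvj => hij ?_, ?_⟩
  · simp only [mem_filter] at hvi hvj
    exact Fin.ext (hvi.2.symm.trans hvj.2)
  · ext v
    simpa using ⟨⟨v.val % n, Nat.mod_lt _ hn⟩, rfl⟩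

lemma card_filter_val_mod_eq {m n i : ℕ} (hi : i < n) :
    #{v : Fin m | v.val % n = i} = m / n + if i < m % n then 1 else 0 := by
  have h := Nat.count_modEq_card m (by omega : 0 < n) i
  rw [Nat.mod_eq_of_lt hi, Nat.count_eq_card_filter_range, ← Nat.Iio_eq_range,
    ← Fin.map_valEmbedding_univ, filter_map, card_map] at h
  rw [← h]
  congr 1
  ext v
  simp [Nat.ModEq, Nat.mod_eq_of_lt hi]

lemma card_filter_val_mod_eq_of_lt {n c d i : ℕ} (hd : d < n) (hi : i < n) :
    #{v : Fin (c * n + d) | v.val % n = i} = if i < d then c + 1 else c := by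
  rw [card_filter_val_mod_eq hi, Nat.add_comm (c * n) d, Nat.add_mul_div_right _ _ (by omega),
    Nat.add_mul_mod_self_right, Nat.div_eq_of_lt hd, Nat.mod_eq_of_lt hd]
  split_ifs <;> omega

lemma sum_card_filter_mod_eq_self_le {n c d : ℕ} (hd : d < n)
    {B : Fin n → Finset (Fin (c * n + d))} (hB : IsAlloc B)
    (hconn : ∀ i, ConnB (pathGraph _) (B i)) :
    ∑ i, #{v ∈ B i | v.val % n = i.val} ≤ n + c - 1 := by
  have h : n * ∑ i, #{v ∈ B i | v.val % n = i.val} ≤ c * n + d + n * (n - 1) := calc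
    _ = ∑ i, n * #{v ∈ B i | v.val % n = i.val} := mul_sum _ _ _
    _ ≤ ∑ i, (#(B i) + (n - 1)) :=
        sum_le_sum fun i _ =>
          (mul_card_filter_mod_eq_le (hconn i).ordConnected n i).trans (by omega)
    _ = c * n + d + n * (n - 1) := by
        rw [sum_add_distrib, hB.sum_card, Fintype.card_fin, sum_const, card_univ, Fintype.card_fin,
          smul_eq_mul]
  have : n * ∑ i, #{v ∈ B i | v.val % n = i.val} < n * (n + c) := by
    obtain ⟨k, rfl⟩ := Nat.exists_eq_add_one_of_ne_zero (by omega : n ≠ 0)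
    simp only [Nat.add_sub_cancel] at h
    nlinarith
  have := Nat.lt_of_mul_lt_mul_left this
  omega

/-- for a path on `m = cn + d` vertices (`c ≥ 1`, `0 ≤ d ≤ n−1`), in the instance
where the vertices are valued by agents in cyclically repeating order (agent `i` values vertex
`v` iff `v ≡ i (mod n)`, at `1/(c+1)` if `i < d` and at `1/c` otherwise), some allocation has
utilitarian welfare `n`, while every connected allocation has utilitarian welfare at most
`(n + c − 1)/c`.  Hence the utilitarian PoC of the path is at least `nc/(n + c − 1)`. -/
theorem util_poc_path_lower (n c d m : ℕ) (hn : 2 ≤ n) (hc : 1 ≤ c) (hd : d ≤ n - 1)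
    (hm : m = c * n + d)
    (u : Fin n → Fin m → ℝ)
    (hu : ∀ (i : Fin n) (v : Fin m),
      u i v = if v.val % n = i.val
        then (if i.val < d then ((c : ℝ) + 1)⁻¹ else ((c : ℝ))⁻¹) else 0) :
    (∃ A : Fin n → Finset (Fin m), IsAlloc A ∧ ∑ i, ∑ v ∈ A i, u i v = n) ∧
    (∀ B : Fin n → Finset (Fin m), IsAlloc B → (∀ i, ConnB (pathGraph m) (B i)) →
      ∑ i, ∑ v ∈ B i, u i v ≤ ((n : ℝ) + c - 1) / c) := by
  subst hm
  have hdn : d < n := by omega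
  have hc0 : (0 : ℝ) < c := by exact_mod_cast hc
  have hwelfare (i : Fin n) (S : Finset (Fin (c * n + d))) :
      ∑ v ∈ S, u i v =
        #{v ∈ S | v.val % n = i.val} * (if i.val < d then ((c : ℝ) + 1)⁻¹ else (c : ℝ)⁻¹) := by
    simp only [hu, ← sum_filter, sum_const, nsmul_eq_mul]
  refine ⟨⟨_, isAlloc_residueClasses (by omega), ?_⟩, fun B hB hconn => ?_⟩
  · have hone (i : Fin n) : ∑ v ∈ {v : Fin (c * n + d) | v.val % n = i.val}, u i v = 1 := by
      simp only [hwelfare, filter_filter, and_self, card_filter_val_mod_eq_of_lt hdn i.2]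
      split_ifs <;> simp [hc0.ne', (by positivity : (c : ℝ) + 1 ≠ 0)]
    simp [hone]
  · have hvalued : ((∑ i, #{v ∈ B i | v.val % n = i.val} : ℕ) : ℝ) ≤ n + c - 1 := by
      rw [← Nat.cast_one, ← Nat.cast_add, ← Nat.cast_sub (by omega)]
      exact_mod_cast sum_card_filter_mod_eq_self_le hdn hB hconn
    calc ∑ i, ∑ v ∈ B i, u i v
        = ∑ i, #{v ∈ B i | v.val % n = i.val} *
            (if i.val < d then ((c : ℝ) + 1)⁻¹ else (c : ℝ)⁻¹) :=
          sum_congr rfl fun i _ => hwelfare i (B i)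
      _ ≤ ∑ i, #{v ∈ B i | v.val % n = i.val} * (c : ℝ)⁻¹ := by
          gcongr with i
          split_ifs
          · exact inv_anti₀ hc0 (by linarith)
          · exact le_rfl
      _ = ((∑ i, #{v ∈ B i | v.val % n = i.val} : ℕ) : ℝ) / c := by
          rw [← sum_mul, Nat.cast_sum, div_eq_mul_inv]
      _ ≤ ((n : ℝ) + c - 1) / c := by gcongr
end

section
/- Utilitarian PoC of a star with n agents, lower bound: let G be a star on m = c(n−1) + d + 1 vertices (c ≥ 1, 0 ≤ d ≤ n−2). In the instance where one agent values the center at 1, d agents each value c+1 distinct leaves at 1/(c+1) each, and n−1−d agents each value c distinct leaves at 1/c each, the unconstrained optimal utilitarian welfare is n, while the best connected allocation has utilitarian welfare exactly 1 + d/(c+1) + (n−d−1)/c. Hence the utilitarian PoC is at least nc(c+1)/(c² + 2nc + n − c − m). -/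
/-- The star on `m` vertices: vertex `0` is the center, adjacent to all other vertices. -/
def starGraph (m : ℕ) : SimpleGraph (Fin m) where
  Adj x y := x ≠ y ∧ (x.val = 0 ∨ y.val = 0)
  symm := ⟨by rintro x y ⟨h1, h2⟩; exact ⟨h1.symm, h2.symm⟩⟩
  loopless := ⟨by rintro x ⟨h1, _⟩; exact h1 rfl⟩

/-! Without connectivity every agent takes all the vertices it owns and gets value `1`. On the
star, any bundle avoiding the center is a connected set of leaves, hence has at most one vertex;
so the agent holding the center gets at most `1` and every other agent at most the value of one
of its leaves, which is `0` for the center-owner. Giving the center (with the unpicked leaves) to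
the center-owner and one owned leaf to every other agent attains this bound. -/

open Finset Function

section Connectivity

variable {V : Type*}

theorem connB_of_card_le_one (G : SimpleGraph V) {s : Finset V} (hs : #s ≤ 1) : ConnB G s := by
  rcases s.eq_empty_or_nonempty with rfl | ⟨v, hv⟩
  · exact Or.inl rfl
  · have : Subsingleton (s : Set V) := Finset.card_le_one_iff_subsingleton_coe.mp hs
    have : Nonempty (s : Set V) := ⟨⟨v, hv⟩⟩
    exact Or.inr .of_subsingleton

variable {m : ℕ}

theorem connB_starGraph_of_mem {s : Finset (Fin m)} {z : Fin m} (hz : z.val = 0) (hzs : z ∈ s) :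
    ConnB (starGraph m) s := by
  refine Or.inr ((SimpleGraph.connected_iff_exists_forall_reachable _).mpr
    ⟨⟨z, hzs⟩, fun ⟨v, hv⟩ => ?_⟩)
  by_cases hvz : v = z
  · subst hvz; rfl
  · exact SimpleGraph.Adj.reachable ⟨fun h => hvz h.symm, Or.inl hz⟩

theorem card_le_one_of_connB_starGraph {s : Finset (Fin m)} (hs : ConnB (starGraph m) s)
    (hleaf : ∀ v ∈ s, v.val ≠ 0) : #s ≤ 1 := by
  rcases hs with rfl | hs
  · simp
  have hbot : (starGraph m).induce (s : Set (Fin m)) = ⊥ := by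
    ext ⟨a, ha⟩ ⟨b, hb⟩
    simp only [SimpleGraph.bot_adj, iff_false]
    rintro ⟨-, h0 | h0⟩
    exacts [hleaf a ha h0, hleaf b hb h0]
  refine Finset.card_le_one.mpr fun a ha b hb => ?_
  have hab := hs.preconnected ⟨a, ha⟩ ⟨b, hb⟩
  rw [hbot, SimpleGraph.reachable_bot] at hab
  exact congrArg Subtype.val hab

end Connectivity

section Allocation

def ownerUtility {V ι : Type*} [DecidableEq ι] (owner : V → ι) (w : ι → ℝ) (i : ι) (v : V) :
    ℝ :=
  if owner v = i then w i else 0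

theorem sum_ownerUtility {V ι : Type*} [DecidableEq ι] (owner : V → ι) (w : ι → ℝ) (i : ι)
    (s : Finset V) : ∑ v ∈ s, ownerUtility owner w i v = #(s.filter (owner · = i)) * w i := by
  simp [ownerUtility, sum_ite]

/-- On the star, with `f` picking one owned vertex per agent and `i₀` owning the center, this
hands every agent but `i₀` a single owned leaf and everything else to `i₀`. -/
def pickReceiver {V ι : Type*} [DecidableEq V] (owner : V → ι) (f : ι → V) (i₀ : ι) (v : V) : ι :=
  if f (owner v) = v then owner v else i₀

section PickReceiver

variable {V ι : Type*} [DecidableEq V] {owner : V → ι} {f : ι → V} {i₀ i : ι} {v : V}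

theorem eq_of_pickReceiver_eq (h : pickReceiver owner f i₀ v = i) (hi : i ≠ i₀) : v = f i := by
  unfold pickReceiver at h
  split_ifs at h with hv
  · exact h ▸ hv.symm
  · exact absurd h.symm hi

theorem pickReceiver_eq_and_owner_eq_iff (hf : ∀ i, owner (f i) = i)
    (hsolo : ∀ v, owner v = i₀ → v = f i₀) :
    pickReceiver owner f i₀ v = i ∧ owner v = i ↔ v = f i := by
  constructor
  · rintro ⟨hr, rfl⟩
    unfold pickReceiver at hr
    split_ifs at hr with hv
    · exact hv.symm
    · exact hr ▸ hsolo v hr.symm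
  · rintro rfl
    simp [pickReceiver, hf]

end PickReceiver

variable {V : Type*} [Fintype V] {n : ℕ}

def fiberAlloc (r : V → Fin n) (i : Fin n) : Finset V := univ.filter (r · = i)

theorem isAlloc_fiberAlloc [DecidableEq V] (r : V → Fin n) : IsAlloc (fiberAlloc r) :=
  ⟨fun _ _ hij => disjoint_filter.mpr fun _ _ hi hj => hij (hi.symm.trans hj),
    eq_univ_of_forall fun v => mem_biUnion.mpr ⟨r v, mem_univ _, by simp [fiberAlloc]⟩⟩

theorem welfare_fiberAlloc_owner (owner : V → Fin n) (w : Fin n → ℝ) :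
    ∑ i, ∑ v ∈ fiberAlloc owner i, ownerUtility owner w i v =
      ∑ i, #(fiberAlloc owner i) * w i := by
  simp [sum_ownerUtility, fiberAlloc, filter_filter]

theorem welfare_fiberAlloc_pickReceiver [DecidableEq V] {owner : V → Fin n} {f : Fin n → V}
    {i₀ : Fin n} (hf : ∀ i, owner (f i) = i) (hsolo : ∀ v, owner v = i₀ → v = f i₀)
    (w : Fin n → ℝ) :
    ∑ i, ∑ v ∈ fiberAlloc (pickReceiver owner f i₀) i, ownerUtility owner w i v = ∑ i, w i := by
  refine sum_congr rfl fun i _ => ?_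
  have hpick : (fiberAlloc (pickReceiver owner f i₀) i).filter (owner · = i) = {f i} := by
    ext v
    simp [fiberAlloc, pickReceiver_eq_and_owner_eq_iff hf hsolo]
  rw [sum_ownerUtility, hpick, card_singleton, Nat.cast_one, one_mul]

theorem surjective_of_card_fiberAlloc_mul_eq_one {owner : V → Fin n} {w : Fin n → ℝ}
    (h : ∀ i, #(fiberAlloc owner i) * w i = 1) : Surjective owner := fun i => by
  obtain ⟨v, hv⟩ : (fiberAlloc owner i).Nonempty :=
    card_pos.mp (Nat.pos_of_ne_zero fun h0 => by simpa [h0] using h i)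
  exact ⟨v, (mem_filter.mp hv).2⟩

end Allocation

section Star

variable {n m : ℕ}

theorem welfare_le_of_connB_starGraph (hm : 0 < m) {u : Fin n → Fin m → ℝ} {b : Fin n → ℝ}
    (hu : ∀ i v, 0 ≤ u i v) (hnorm : ∀ i, ∑ v, u i v ≤ 1)
    (hleaf : ∀ i v, v.val ≠ 0 → u i v ≤ b i) (hb : ∀ i, 0 ≤ b i)
    {B : Fin n → Finset (Fin m)} (hB : IsAlloc B) (hconn : ∀ i, ConnB (starGraph m) (B i)) :
    ∑ i, ∑ v ∈ B i, u i v ≤ 1 + ∑ i, b i := by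
  set z : Fin m := ⟨0, hm⟩
  obtain ⟨i₀, -, hi₀⟩ := mem_biUnion.mp (hB.2 ▸ mem_univ z : z ∈ univ.biUnion B)
  have hcenter : ∑ v ∈ B i₀, u i₀ v ≤ 1 :=
    (sum_le_sum_of_subset_of_nonneg (subset_univ _) fun v _ _ => hu i₀ v).trans (hnorm i₀)
  have hother : ∀ i ∈ univ.erase i₀, ∑ v ∈ B i, u i v ≤ b i := by
    intro i hi
    have hleafs : ∀ v ∈ B i, v.val ≠ 0 := fun v hv h0 =>
      disjoint_left.mp (hB.1 i i₀ (ne_of_mem_erase hi)) hv ((Fin.ext h0 : v = z) ▸ hi₀)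
    calc ∑ v ∈ B i, u i v ≤ #(B i) • b i :=
          sum_le_card_nsmul _ _ _ fun v hv => hleaf i v (hleafs v hv)
      _ ≤ b i := by
          rw [nsmul_eq_mul]
          exact mul_le_of_le_one_left (hb i)
            (by exact_mod_cast card_le_one_of_connB_starGraph (hconn i) hleafs)
  calc ∑ i, ∑ v ∈ B i, u i v = ∑ v ∈ B i₀, u i₀ v + ∑ i ∈ univ.erase i₀, ∑ v ∈ B i, u i v :=
        (add_sum_erase _ _ (mem_univ i₀)).symm
    _ ≤ 1 + ∑ i ∈ univ.erase i₀, b i := add_le_add hcenter (sum_le_sum hother)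
    _ ≤ 1 + ∑ i, b i := by
        gcongr
        exacts [fun i _ _ => hb i, erase_subset _ _]

theorem exists_connB_starGraph_welfare_eq {owner : Fin m → Fin n} (hsurj : Surjective owner)
    {i₀ : Fin n} (hcenter : ∀ v, owner v = i₀ ↔ v.val = 0) (w : Fin n → ℝ) :
    ∃ B : Fin n → Finset (Fin m), IsAlloc B ∧ (∀ i, ConnB (starGraph m) (B i)) ∧
      ∑ i, ∑ v ∈ B i, ownerUtility owner w i v = ∑ i, w i := by
  set f := surjInv hsurj
  have hf : ∀ i, owner (f i) = i := surjInv_eq hsurj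
  have hz : (f i₀).val = 0 := (hcenter _).mp (hf i₀)
  have hsolo : ∀ v, owner v = i₀ → v = f i₀ := fun v hv =>
    Fin.ext (((hcenter v).mp hv).trans hz.symm)
  refine ⟨fiberAlloc (pickReceiver owner f i₀), isAlloc_fiberAlloc _, fun i => ?_,
    welfare_fiberAlloc_pickReceiver hf hsolo w⟩
  by_cases hi : i = i₀
  · subst hi
    refine connB_starGraph_of_mem hz ?_
    simp [fiberAlloc, pickReceiver, hf]
  · refine connB_of_card_le_one _ (card_le_one.mpr fun a ha b hb => ?_)
    simp only [fiberAlloc, mem_filter, mem_univ, true_and] at ha hb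
    exact (eq_of_pickReceiver_eq ha hi).trans (eq_of_pickReceiver_eq hb hi).symm

theorem welfare_ownerUtility_le_of_connB_starGraph (hm : 0 < m) {owner : Fin m → Fin n}
    (hown : ∀ v, (owner v).val = 0 ↔ v.val = 0) {w : Fin n → ℝ} (hw : ∀ i, 0 ≤ w i)
    (hnorm : ∀ i, ∑ v, ownerUtility owner w i v ≤ 1)
    {B : Fin n → Finset (Fin m)} (hB : IsAlloc B) (hconn : ∀ i, ConnB (starGraph m) (B i)) :
    ∑ i, ∑ v ∈ B i, ownerUtility owner w i v ≤ 1 + ∑ i : Fin n, if i.val = 0 then 0 else w i := by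
  refine welfare_le_of_connB_starGraph hm (fun i v => ?_) hnorm (fun i v hv => ?_)
    (fun i => ?_) hB hconn
  · unfold ownerUtility
    split_ifs
    exacts [hw i, le_rfl]
  · unfold ownerUtility
    split_ifs with hvi hi hi
    exacts [absurd ((hown v).mp (hvi ▸ hi)) hv, le_rfl, le_rfl, hw i]
  · split_ifs
    exacts [le_rfl, hw i]

end Star

section Instance

noncomputable def starWeight (c d k : ℕ) : ℝ :=
  if k = 0 then 1 else if k ≤ d then ((c : ℝ) + 1)⁻¹ else (c : ℝ)⁻¹

variable {c d n : ℕ}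

theorem sum_range_starWeight_succ (hdn : d ≤ n) :
    ∑ k ∈ range n, starWeight c d (k + 1) = d / ((c : ℝ) + 1) + ((n : ℝ) - d) / c := by
  have hlow : ∀ k ∈ range d, starWeight c d (k + 1) = ((c : ℝ) + 1)⁻¹ := fun k hk => by
    rw [mem_range] at hk
    simp [starWeight, Nat.succ_le_of_lt hk]
  have hhigh : ∀ k ∈ Ico d n, starWeight c d (k + 1) = (c : ℝ)⁻¹ := fun k hk => by
    rw [mem_Ico] at hk
    simp [starWeight, show ¬ k + 1 ≤ d by omega]
  rw [← sum_range_add_sum_Ico _ hdn, sum_congr rfl hlow, sum_congr rfl hhigh]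
  simp [Nat.cast_sub hdn, div_eq_mul_inv]

theorem sum_starWeight (hdn : d < n) :
    ∑ i : Fin n, starWeight c d i = 1 + d / ((c : ℝ) + 1) + ((n : ℝ) - d - 1) / c := by
  obtain ⟨n, rfl⟩ := Nat.exists_eq_add_of_lt hdn
  rw [Fin.sum_univ_eq_sum_range (starWeight c d), sum_range_succ', sum_range_starWeight_succ]
  · simp only [starWeight, if_pos]
    push_cast
    ring
  · omega

theorem sum_starWeight_leaf (hdn : d < n) :
    ∑ i : Fin n, (if i.val = 0 then 0 else starWeight c d i) =
      d / ((c : ℝ) + 1) + ((n : ℝ) - d - 1) / c := by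
  obtain ⟨n, rfl⟩ := Nat.exists_eq_add_of_lt hdn
  rw [Fin.sum_univ_eq_sum_range (fun k => if k = 0 then 0 else starWeight c d k),
    sum_range_succ']
  simp only [Nat.add_one_ne_zero, if_false, if_true]
  rw [sum_range_starWeight_succ (by omega)]
  push_cast
  ring

theorem div_one_add_div_add_div_eq {n c d m : ℝ} (hc : 0 < c) (hm : m = c * (n - 1) + d + 1) :
    n / (1 + d / (c + 1) + (n - d - 1) / c) =
      n * c * (c + 1) / (c ^ 2 + 2 * n * c + n - c - m) := by
  have hE : 1 + d / (c + 1) + (n - d - 1) / c =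
      (c ^ 2 + 2 * n * c + n - c - m) / (c * (c + 1)) := by
    rw [hm]
    field_simp
    ring
  rw [hE, div_div_eq_mul_div, ← mul_assoc]

theorem starWeight_nonneg (k : ℕ) : 0 ≤ starWeight c d k := by
  unfold starWeight
  split_ifs <;> positivity

theorem card_fiberAlloc_mul_starWeight {m : ℕ} (hc : 1 ≤ c) (hm : 0 < m)
    {owner : Fin m → Fin n} (hown : ∀ v, (owner v).val = 0 ↔ v.val = 0)
    (hcount1 : ∀ i : Fin n, 1 ≤ i.val → i.val ≤ d → #(fiberAlloc owner i) = c + 1)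
    (hcount2 : ∀ i : Fin n, d < i.val → #(fiberAlloc owner i) = c) (i : Fin n) :
    #(fiberAlloc owner i) * starWeight c d i = 1 := by
  have hc0 : (c : ℝ) ≠ 0 := by positivity
  rcases Nat.eq_zero_or_pos i.val with h0 | hpos
  · have hsingle : fiberAlloc owner i = {⟨0, hm⟩} := by
      ext v
      simp [fiberAlloc, Fin.ext_iff, h0, hown]
    simp [hsingle, starWeight, h0]
  · by_cases hle : i.val ≤ d
    · rw [hcount1 i hpos hle, starWeight, if_neg hpos.ne', if_pos hle]
      push_cast
      exact mul_inv_cancel₀ (by positivity)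
    · rw [hcount2 i (by omega), starWeight, if_neg hpos.ne', if_neg hle]
      exact mul_inv_cancel₀ hc0

end Instance

theorem util_poc_star_lower_general (n c d m : ℕ) (hc : 1 ≤ c) (hd : d ≤ n - 2)
    (hm : m = c * (n - 1) + d + 1)
    (owner : Fin m → Fin n)
    (howner0 : ∀ v : Fin m, v.val = 0 → (owner v).val = 0)
    (howner0' : ∀ v : Fin m, v.val ≠ 0 → (owner v).val ≠ 0)
    (hcount1 : ∀ i : Fin n, 1 ≤ i.val → i.val ≤ d →
      (Finset.univ.filter (fun v : Fin m => owner v = i)).card = c + 1)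
    (hcount2 : ∀ i : Fin n, d < i.val →
      (Finset.univ.filter (fun v : Fin m => owner v = i)).card = c)
    (u : Fin n → Fin m → ℝ)
    (hu : ∀ (i : Fin n) (v : Fin m),
      u i v = if owner v = i
        then (if i.val = 0 then (1 : ℝ)
          else if i.val ≤ d then ((c : ℝ) + 1)⁻¹ else ((c : ℝ))⁻¹)
        else 0) :
    (∃ A : Fin n → Finset (Fin m), IsAlloc A ∧ ∑ i, ∑ v ∈ A i, u i v = n) ∧
    (∀ B : Fin n → Finset (Fin m), IsAlloc B → (∀ i, ConnB (starGraph m) (B i)) →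
      ∑ i, ∑ v ∈ B i, u i v ≤ 1 + (d : ℝ) / ((c : ℝ) + 1) + ((n : ℝ) - d - 1) / c) ∧
    (∃ B : Fin n → Finset (Fin m), IsAlloc B ∧ (∀ i, ConnB (starGraph m) (B i)) ∧
      ∑ i, ∑ v ∈ B i, u i v = 1 + (d : ℝ) / ((c : ℝ) + 1) + ((n : ℝ) - d - 1) / c) ∧
    ((n : ℝ) / (1 + (d : ℝ) / ((c : ℝ) + 1) + ((n : ℝ) - d - 1) / c) =
      (n : ℝ) * c * ((c : ℝ) + 1) /
        ((c : ℝ) ^ 2 + 2 * (n : ℝ) * c + (n : ℝ) - (c : ℝ) - (m : ℝ))) := by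
  have hm0 : 0 < m := by omega
  have hdn : d < n := by have := (owner ⟨0, hm0⟩).pos; omega
  have hown : ∀ v, (owner v).val = 0 ↔ v.val = 0 := fun v =>
    ⟨not_imp_not.mp (howner0' v), howner0 v⟩
  obtain rfl : u = ownerUtility owner (fun i => starWeight c d i) := funext fun i => funext (hu i)
  have hnorm := card_fiberAlloc_mul_starWeight hc hm0 hown hcount1 hcount2
  have hnorm' : ∀ i, ∑ v, ownerUtility owner (fun i => starWeight c d i) i v = 1 := fun i => by
    rw [sum_ownerUtility]
    exact hnorm i
  have hsurj := surjective_of_card_fiberAlloc_mul_eq_one hnorm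
  have hcenter : ∀ v, owner v = owner ⟨0, hm0⟩ ↔ v.val = 0 := fun v => by
    rw [Fin.ext_iff, howner0 ⟨0, hm0⟩ rfl, hown]
  refine ⟨⟨fiberAlloc owner, isAlloc_fiberAlloc owner, ?_⟩, fun B hB hconn => ?_, ?_, ?_⟩
  · simp [welfare_fiberAlloc_owner, hnorm]
  · rw [add_assoc, ← sum_starWeight_leaf hdn]
    exact welfare_ownerUtility_le_of_connB_starGraph hm0 hown (fun i => starWeight_nonneg _)
      (fun i => (hnorm' i).le) hB hconn
  · rw [← sum_starWeight hdn]
    exact exists_connB_starGraph_welfare_eq hsurj hcenter _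
  · refine div_one_add_div_add_div_eq (by positivity) ?_
    rw [hm]
    push_cast [Nat.cast_sub (by omega : 1 ≤ n)]
    ring

/-- for a star on `m = c(n−1) + d + 1` vertices (`c ≥ 1`, `0 ≤ d ≤ n−2`),
consider the instance where agent 0 values the center (vertex 0) at `1`, each of `d` agents
owns `c+1` distinct leaves valued at `1/(c+1)` each, and each of the remaining `n−1−d` agents
owns `c` distinct leaves valued at `1/c` each (ownership described by `owner`).  Then some
allocation has utilitarian welfare `n`, every connected allocation has utilitarian welfare at
most `E = 1 + d/(c+1) + (n−d−1)/c`, some connected allocation achieves exactly `E`, and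
`n / E = nc(c+1)/(c² + 2nc + n − c − m)`.  Hence the utilitarian price of connectivity of the
star is at least `nc(c+1)/(c² + 2nc + n − c − m)`. -/
theorem util_poc_star_lower (n c d m : ℕ) (hn : 2 ≤ n) (hc : 1 ≤ c) (hd : d ≤ n - 2)
    (hm : m = c * (n - 1) + d + 1)
    (owner : Fin m → Fin n)
    (howner0 : ∀ v : Fin m, v.val = 0 → (owner v).val = 0)
    (howner0' : ∀ v : Fin m, v.val ≠ 0 → (owner v).val ≠ 0)
    (hcount1 : ∀ i : Fin n, 1 ≤ i.val → i.val ≤ d →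
      (Finset.univ.filter (fun v : Fin m => owner v = i)).card = c + 1)
    (hcount2 : ∀ i : Fin n, d < i.val →
      (Finset.univ.filter (fun v : Fin m => owner v = i)).card = c)
    (u : Fin n → Fin m → ℝ)
    (hu : ∀ (i : Fin n) (v : Fin m),
      u i v = if owner v = i
        then (if i.val = 0 then (1 : ℝ)
          else if i.val ≤ d then ((c : ℝ) + 1)⁻¹ else ((c : ℝ))⁻¹)
        else 0) :
    (∃ A : Fin n → Finset (Fin m), IsAlloc A ∧ ∑ i, ∑ v ∈ A i, u i v = n) ∧
    (∀ B : Fin n → Finset (Fin m), IsAlloc B → (∀ i, ConnB (starGraph m) (B i)) →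
      ∑ i, ∑ v ∈ B i, u i v ≤ 1 + (d : ℝ) / ((c : ℝ) + 1) + ((n : ℝ) - d - 1) / c) ∧
    (∃ B : Fin n → Finset (Fin m), IsAlloc B ∧ (∀ i, ConnB (starGraph m) (B i)) ∧
      ∑ i, ∑ v ∈ B i, u i v = 1 + (d : ℝ) / ((c : ℝ) + 1) + ((n : ℝ) - d - 1) / c) ∧
    ((n : ℝ) / (1 + (d : ℝ) / ((c : ℝ) + 1) + ((n : ℝ) - d - 1) / c) =
      (n : ℝ) * c * ((c : ℝ) + 1) /
        ((c : ℝ) ^ 2 + 2 * (n : ℝ) * c + (n : ℝ) - (c : ℝ) - (m : ℝ))) :=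
  util_poc_star_lower_general n c d m hc hd hm owner howner0 howner0' hcount1 hcount2 u hu
end
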